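/- arXiv:2012.07569 — 2 statements merged into one kernel-verified Lean document; each statement's English description precedes it below -/
import Mathlib

section
/- Let A : E → E' be a linear map between finite-dimensional real inner product spaces, and let V, W be orthogonal subspaces of E. Then the volume-scaling determinant of A on V ⊕ W is at most the product of the volume-scaling determinants of A on V and on W: |det(A|_{V ⊕ W})| ≤ |det(A|_V)| · |det(A|_W)|. -/
/-! Pick orthonormal bases of `V` and `W`; as `V ⟂ W`, together they form an orthonormal basis
of `V ⊔ W`. For an orthonormal basis `(bᵢ)` of `U`, `sdet A U = √(det G)` with `G` the Gram
matrix of the vectors `A bᵢ`. The Gram matrix for `V ⊔ W` is positive semidefinite and its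
diagonal blocks are the Gram matrices for `V` and `W`, so the claim is Fischer's inequality
`det M ≤ det M₁₁ * det M₂₂`. That follows from the Schur complement formula
`det M = det M₁₁ * det (M₂₂ - M₁₂ᴴ M₁₁⁻¹ M₁₂)` together with `det S ≤ det (S + X)` for positive
semidefinite `S` and `X`. -/

/-- The volume-scaling factor (absolute Jacobian determinant) of a linear map `A`
restricted to a subspace `V`, defined via the Gram determinant `√(det (A|_V)^* (A|_V))`.
For `V = ⊥` it equals `1`. -/
noncomputable def sdet {E F : Type*} [NormedAddCommGroup E] [InnerProductSpace ℝ E]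
    [FiniteDimensional ℝ E] [NormedAddCommGroup F] [InnerProductSpace ℝ F]
    [FiniteDimensional ℝ F] (A : E →ₗ[ℝ] F) (V : Submodule ℝ E) : ℝ :=
  Real.sqrt (LinearMap.det ((LinearMap.adjoint (A ∘ₗ V.subtype)) ∘ₗ (A ∘ₗ V.subtype)))

open Matrix Submodule Set
open scoped MatrixOrder

namespace Matrix

variable {m n : Type*} [Fintype m] [DecidableEq m] [Fintype n] [DecidableEq n]

theorem PosSemidef.one_le_det_one_add {Y : Matrix n n ℝ} (hY : Y.PosSemidef) :
    1 ≤ (1 + Y).det := by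
  set U := Unitary.conjStarAlgAut ℝ (Matrix n n ℝ) hY.isHermitian.eigenvectorUnitary
  have hdiag : 1 + Y = U (diagonal fun i => 1 + hY.isHermitian.eigenvalues i) := by
    conv_lhs => rw [hY.isHermitian.spectral_theorem, ← map_one U]
    rw [← map_add, ← diagonal_one, diagonal_add]
    rfl
  rw [hdiag, det_map, det_diagonal]
  exact Finset.one_le_prod fun i _ => le_add_of_nonneg_right (hY.eigenvalues_nonneg i)

theorem PosSemidef.det_le_det_add {S X : Matrix n n ℝ} (hS : S.PosSemidef) (hX : X.PosSemidef) :
    S.det ≤ (S + X).det := by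
  rcases eq_or_ne S.det 0 with hdet | hdet
  · exact hdet ▸ (hS.add hX).det_nonneg
  have hSpd : S.PosDef := hS.posDef_iff_det_ne_zero.mpr hdet
  obtain ⟨C, rfl⟩ := CStarAlgebra.nonneg_iff_eq_star_mul_self.mp hX.nonneg
  have hfactor : S + star C * C = S * (1 + S⁻¹ * star C * C) := by
    rw [mul_add, mul_one, ← mul_assoc, ← mul_assoc, mul_nonsing_inv _ (isUnit_iff_ne_zero.mpr hdet),
      one_mul]
  have hY : (C * S⁻¹ * Cᴴ).PosSemidef := hSpd.inv.posSemidef.mul_mul_conjTranspose_same C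
  rw [hfactor, det_mul, det_one_add_mul_comm (S⁻¹ * star C) C, ← mul_assoc]
  exact le_mul_of_one_le_right hS.det_nonneg hY.one_le_det_one_add

theorem PosSemidef.det_eq_zero_of_det_toBlocks₁₁_eq_zero {M : Matrix (m ⊕ n) (m ⊕ n) ℝ}
    (hM : M.PosSemidef) (hdet : M.toBlocks₁₁.det = 0) : M.det = 0 := by
  obtain ⟨x, hx, hPx⟩ := exists_mulVec_eq_zero_iff.mpr hdet
  refine exists_mulVec_eq_zero_iff.mp ⟨Sum.elim x 0, fun h => hx ?_, ?_⟩
  · simpa using congrArg (· ∘ Sum.inl) h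
  · rw [← hM.dotProduct_mulVec_zero_iff, ← fromBlocks_toBlocks M]
    simp [fromBlocks_mulVec, hPx]

theorem PosSemidef.det_le_det_toBlocks₁₁_mul_det_toBlocks₂₂ {M : Matrix (m ⊕ n) (m ⊕ n) ℝ}
    (hM : M.PosSemidef) : M.det ≤ M.toBlocks₁₁.det * M.toBlocks₂₂.det := by
  have hP : M.toBlocks₁₁.PosSemidef := hM.submatrix Sum.inl
  rcases eq_or_ne M.toBlocks₁₁.det 0 with hdet | hdet
  · rw [hM.det_eq_zero_of_det_toBlocks₁₁_eq_zero hdet, hdet, zero_mul]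
  have hPpd : M.toBlocks₁₁.PosDef := hP.posDef_iff_det_ne_zero.mpr hdet
  have : Invertible M.toBlocks₁₁ := invertibleOfIsUnitDet _ (isUnit_iff_ne_zero.mpr hdet)
  have hblocks : M = fromBlocks M.toBlocks₁₁ M.toBlocks₁₂ M.toBlocks₁₂ᴴ M.toBlocks₂₂ := by
    have h₂₁ : M.toBlocks₂₁ = M.toBlocks₁₂ᴴ := by
      ext i j
      exact (hM.isHermitian.apply _ _).symm
    rw [← h₂₁, fromBlocks_toBlocks]
  have hSchur := (PosDef.fromBlocks₁₁ _ _ hPpd).mp (hblocks ▸ hM)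
  have hX := hPpd.inv.posSemidef.conjTranspose_mul_mul_same M.toBlocks₁₂
  conv_lhs => rw [hblocks, det_fromBlocks₁₁, invOf_eq_nonsing_inv]
  refine mul_le_mul_of_nonneg_left ?_ hP.det_nonneg
  simpa using hSchur.det_le_det_add hX

end Matrix

section Orthonormal

variable {𝕜 E : Type*} [RCLike 𝕜] [NormedAddCommGroup E] [InnerProductSpace 𝕜 E] {ι κ : Type*}

theorem Orthonormal.sumElim {u : ι → E} {w : κ → E} (hu : Orthonormal 𝕜 u) (hw : Orthonormal 𝕜 w)
    (huw : ∀ i j, inner 𝕜 (u i) (w j) = 0) : Orthonormal 𝕜 (Sum.elim u w) := by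
  classical
  rw [orthonormal_iff_ite] at hu hw ⊢
  rintro (i | i) (j | j)
  · simpa using hu i j
  · simpa using huw i j
  · simpa using inner_eq_zero_symm.mp (huw j i)
  · simpa using hw i j

theorem OrthonormalBasis.span_range_coe [Fintype ι] {U : Submodule 𝕜 E}
    (b : OrthonormalBasis ι 𝕜 U) : span 𝕜 (range fun i => (b i : E)) = U := by
  rw [show (fun i => (b i : E)) = U.subtype ∘ b from rfl, range_comp, span_image, ← b.coe_toBasis,
    b.toBasis.span_eq, map_subtype_top]

end Orthonormal

section Sdet

variable {E F : Type*} [NormedAddCommGroup E] [InnerProductSpace ℝ E] [FiniteDimensional ℝ E]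
  [NormedAddCommGroup F] [InnerProductSpace ℝ F] [FiniteDimensional ℝ F]
  {ι : Type*} [Fintype ι] [DecidableEq ι]

theorem sdet_eq_sqrt_det_gram (A : E →ₗ[ℝ] F) {U : Submodule ℝ E} (b : OrthonormalBasis ι ℝ U) :
    sdet A U = √(gram ℝ fun i => A (b i)).det := by
  rw [sdet, ← LinearMap.det_toMatrix b.toBasis]
  congr 2
  ext i j
  rw [LinearMap.toMatrix_apply, b.coe_toBasis, b.coe_toBasis_repr_apply, b.repr_apply_apply,
    LinearMap.comp_apply, LinearMap.adjoint_inner_right]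
  simp [gram_apply]

theorem sdet_span_eq_sqrt_det_gram (A : E →ₗ[ℝ] F) {v : ι → E} (hv : Orthonormal ℝ v) :
    sdet A (span ℝ (range v)) = √(gram ℝ (A ∘ v)).det := by
  let b := Module.Basis.span hv.linearIndependent
  have hb : Orthonormal ℝ b := (span ℝ (range v)).subtypeₗᵢ.orthonormal_comp_iff.mp <| by
    convert hv
    ext i
    simp [b, Module.Basis.span_apply]
  rw [sdet_eq_sqrt_det_gram A (b.toOrthonormalBasis hb)]
  simp only [b, Module.Basis.coe_toOrthonormalBasis, Module.Basis.span_apply]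
  rfl

end Sdet

/-- For a linear map `A : E → E'` between finite-dimensional real inner product
spaces and orthogonal subspaces `V ⟂ W` of `E`, the volume-scaling determinant on `V ⊕ W`
is at most the product of those on `V` and on `W`. -/
theorem stmt1 {E E' : Type*} [NormedAddCommGroup E] [InnerProductSpace ℝ E]
    [FiniteDimensional ℝ E] [NormedAddCommGroup E'] [InnerProductSpace ℝ E']
    [FiniteDimensional ℝ E'] (A : E →ₗ[ℝ] E') (V W : Submodule ℝ E)
    (horth : ∀ v ∈ V, ∀ w ∈ W, (inner ℝ v w : ℝ) = 0) :
    sdet A (V ⊔ W) ≤ sdet A V * sdet A W := by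
  set bV := stdOrthonormalBasis ℝ V
  set bW := stdOrthonormalBasis ℝ W
  set u := fun i => (bV i : E)
  set w := fun j => (bW j : E)
  have huw : Orthonormal ℝ (Sum.elim u w) :=
    (bV.orthonormal.comp_linearIsometry V.subtypeₗᵢ).sumElim
      (bW.orthonormal.comp_linearIsometry W.subtypeₗᵢ) fun i j => horth _ (bV i).2 _ (bW j).2
  have hspan : span ℝ (range (Sum.elim u w)) = V ⊔ W := by
    rw [Set.Sum.elim_range, span_union, bV.span_range_coe, bW.span_range_coe]
  have hfischer := (posSemidef_gram ℝ (A ∘ Sum.elim u w)).det_le_det_toBlocks₁₁_mul_det_toBlocks₂₂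
  rw [← hspan, sdet_span_eq_sqrt_det_gram A huw, sdet_eq_sqrt_det_gram A bV,
    sdet_eq_sqrt_det_gram A bW, ← Real.sqrt_mul (posSemidef_gram ℝ _).det_nonneg]
  exact Real.sqrt_le_sqrt hfischer
end

section
/- Let E = V ⊕ W be a direct sum decomposition of a finite-dimensional real inner product space with the angle between V and W bounded below by α > 0, and let A be a linear automorphism of E preserving the decomposition (A(V) = V', A(W) = W' with angle between V' and W' also at least α). Then there is a constant c(α) > 0 depending only on α and the dimensions such that c(α) |det(A|_V)|·|det(A|_W)| ≤ |det A| ≤ c(α)^{-1} |det(A|_V)|·|det(A|_W)|. -/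
/-!
Let `S : V × W → E` be `(v, w) ↦ v + w` on the `L²` product, and `S'` the same map for
`A V, A W`. With `A_V : V → A V` and `A_W : W → A W` the restrictions of `A`,
`A ∘ S = S' ∘ (A_V × A_W)`, so multiplicativity of the volume factor `normDet` gives
`|det A| · normDet S = normDet S' · sdet A V · sdet A W`. The angle bound makes `S` and `S'`
bi-Lipschitz with constants `√(1 - cos α)` and `√2`; hence all their singular values lie between
these constants, and `normDet S`, `normDet S'` lie between `√(1 - cos α) ^ n` and `√2 ^ n`.
This gives the claim with `c = (√(1 - cos α) / √2) ^ n`.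
-/

open Module LinearMap
open scoped RealInnerProductSpace

namespace LinearMap

variable {𝕜 U V : Type*} [RCLike 𝕜] [NormedAddCommGroup U] [InnerProductSpace 𝕜 U]
  [FiniteDimensional 𝕜 U] [NormedAddCommGroup V] [InnerProductSpace 𝕜 V] [FiniteDimensional 𝕜 V]

theorem exists_norm_apply_eq_singularValues_mul (f : U →ₗ[𝕜] V) {i : ℕ}
    (hi : i < finrank 𝕜 U) : ∃ x ≠ 0, ‖f x‖ = f.singularValues i * ‖x‖ := by
  obtain ⟨x, hx⟩ := (f.hasEigenvalue_adjoint_comp_self_sq_singularValues hi).exists_hasEigenvector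
  refine ⟨x, hx.2, ?_⟩
  have hsq : ((‖f x‖ ^ 2 : ℝ) : 𝕜) = ((f.singularValues i * ‖x‖) ^ 2 : ℝ) := by
    rw [RCLike.ofReal_pow, ← inner_self_eq_norm_sq_to_K, ← adjoint_inner_left,
      ← comp_apply, Module.End.mem_eigenspace_iff.mp hx.1, inner_smul_left,
      inner_self_eq_norm_sq_to_K]
    simp [mul_pow]
  exact (pow_left_inj₀ (norm_nonneg _)
    (mul_nonneg (f.singularValues_nonneg i) (norm_nonneg x)) two_ne_zero).mp
    (RCLike.ofReal_injective hsq)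

theorem pow_finrank_le_normDet (f : U →ₗ[𝕜] V) {c : ℝ} (hc : 0 ≤ c)
    (h : ∀ x, c * ‖x‖ ≤ ‖f x‖) : c ^ finrank 𝕜 U ≤ f.normDet := by
  rw [normDet_eq_prod_singularValues]
  conv_lhs => rw [← Finset.card_range (finrank 𝕜 U), ← Finset.prod_const]
  refine Finset.prod_le_prod (fun _ _ ↦ hc) fun i hi ↦ ?_
  obtain ⟨x, hx0, hx⟩ := f.exists_norm_apply_eq_singularValues_mul (Finset.mem_range.mp hi)
  exact le_of_mul_le_mul_right (hx ▸ h x) (norm_pos_iff.mpr hx0)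

theorem normDet_le_pow_finrank (f : U →ₗ[𝕜] V) {C : ℝ} (h : ∀ x, ‖f x‖ ≤ C * ‖x‖) :
    f.normDet ≤ C ^ finrank 𝕜 U := by
  rw [normDet_eq_prod_singularValues]
  conv_rhs => rw [← Finset.card_range (finrank 𝕜 U), ← Finset.prod_const]
  refine Finset.prod_le_prod (fun i _ ↦ f.singularValues_nonneg i) fun i hi ↦ ?_
  obtain ⟨x, hx0, hx⟩ := f.exists_norm_apply_eq_singularValues_mul (Finset.mem_range.mp hi)
  exact le_of_mul_le_mul_right (hx ▸ h x) (norm_pos_iff.mpr hx0)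

variable {U' V' : Type*} [NormedAddCommGroup U'] [InnerProductSpace 𝕜 U'] [FiniteDimensional 𝕜 U']
  [NormedAddCommGroup V'] [InnerProductSpace 𝕜 V'] [FiniteDimensional 𝕜 V']

theorem adjoint_withLpMap_prodMap (f : U →ₗ[𝕜] V) (g : U' →ₗ[𝕜] V') :
    adjoint ((f.prodMap g).withLpMap 2) = ((adjoint f).prodMap (adjoint g)).withLpMap 2 := by
  refine ((eq_adjoint_iff _ _).mpr fun x y ↦ ?_).symm
  simp [WithLp.prod_inner_apply, adjoint_inner_left]

theorem det_withLpMap {R M : Type*} [CommRing R] [AddCommGroup M] [Module R M] (p : ENNReal)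
    (f : M →ₗ[R] M) : (f.withLpMap p).det = f.det :=
  det_conj f (WithLp.linearEquiv p R M).symm

theorem normDet_withLpMap_prodMap (f : U →ₗ[𝕜] V) (g : U' →ₗ[𝕜] V') :
    ((f.prodMap g).withLpMap 2).normDet = f.normDet * g.normDet := by
  have hsq : (((f.prodMap g).withLpMap 2).normDet ^ 2 : 𝕜) = ((f.normDet * g.normDet) ^ 2 : ℝ) := by
    rw [← RCLike.ofReal_pow, normDet_sq, adjoint_withLpMap_prodMap, ← withLpMap_comp,
      prodMap_comp, det_withLpMap, det_prodMap, ← normDet_sq, ← normDet_sq]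
    push_cast; ring
  exact (pow_left_inj₀ (normDet_nonneg _)
    (mul_nonneg (normDet_nonneg f) (normDet_nonneg g)) two_ne_zero).mp
    (RCLike.ofReal_injective (K := 𝕜) (by exact_mod_cast hsq))

end LinearMap

theorem IsCompl.map_linearEquiv {R M N : Type*} [Ring R] [AddCommGroup M] [Module R M]
    [AddCommGroup N] [Module R N] {V W : Submodule R M} (h : IsCompl V W) (A : M ≃ₗ[R] N) :
    IsCompl (V.map (A : M →ₗ[R] N)) (W.map (A : M →ₗ[R] N)) :=
  h.map (Submodule.orderIsoMapComap A)

section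

variable {E : Type*} [NormedAddCommGroup E] [InnerProductSpace ℝ E]

theorem one_sub_mul_le_norm_add_sq {v w : E} {k : ℝ} (hk : 0 ≤ k)
    (h : v ≠ 0 → w ≠ 0 → |⟪v, w⟫| ≤ k * (‖v‖ * ‖w‖)) :
    (1 - k) * (‖v‖ ^ 2 + ‖w‖ ^ 2) ≤ ‖v + w‖ ^ 2 := by
  have hvw : |⟪v, w⟫| ≤ k * (‖v‖ * ‖w‖) := by
    rcases eq_or_ne v 0 with rfl | hv
    · simp
    rcases eq_or_ne w 0 with rfl | hw
    · simp
    exact h hv hw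
  rw [norm_add_sq_real]
  nlinarith [neg_abs_le ⟪v, w⟫, sq_nonneg (‖v‖ - ‖w‖)]

noncomputable def sumMap (V W : Submodule ℝ E) : WithLp 2 (V × W) →ₗ[ℝ] E :=
  V.subtype.coprod W.subtype ∘ₗ (WithLp.linearEquiv 2 ℝ (V × W)).toLinearMap

variable {V W : Submodule ℝ E}

@[simp]
theorem sumMap_apply (x : WithLp 2 (V × W)) : sumMap V W x = (x.fst : E) + x.snd := rfl

theorem norm_sumMap_le (x : WithLp 2 (V × W)) : ‖sumMap V W x‖ ≤ √2 * ‖x‖ := by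
  rw [← Real.sqrt_sq (norm_nonneg (sumMap V W x)), ← Real.sqrt_sq (norm_nonneg x),
    ← Real.sqrt_mul zero_le_two]
  refine Real.sqrt_le_sqrt ?_
  rw [WithLp.prod_norm_sq_eq_of_L2, sumMap_apply]
  exact (pow_le_pow_left₀ (norm_nonneg _) (norm_add_le _ _) 2).trans add_sq_le

theorem sqrt_one_sub_mul_norm_le_norm_sumMap {k : ℝ} (hk : 0 ≤ k)
    (h : ∀ v ∈ V, ∀ w ∈ W, v ≠ 0 → w ≠ 0 → |⟪v, w⟫| ≤ k * (‖v‖ * ‖w‖))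
    (x : WithLp 2 (V × W)) : √(1 - k) * ‖x‖ ≤ ‖sumMap V W x‖ := by
  rw [← Real.sqrt_sq (norm_nonneg (sumMap V W x)), ← Real.sqrt_sq (norm_nonneg x),
    ← Real.sqrt_mul' _ (sq_nonneg _)]
  refine Real.sqrt_le_sqrt ?_
  rw [WithLp.prod_norm_sq_eq_of_L2, sumMap_apply]
  exact one_sub_mul_le_norm_add_sq hk (h _ x.fst.2 _ x.snd.2)

variable [FiniteDimensional ℝ E]

theorem finrank_withLp_prod_of_isCompl (h : IsCompl V W) :
    finrank ℝ (WithLp 2 (V × W)) = finrank ℝ E := by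
  rw [(WithLp.linearEquiv 2 ℝ (V × W)).finrank_eq, finrank_prod,
    Submodule.finrank_add_eq_of_isCompl h]

theorem pow_le_normDet_sumMap (hVW : IsCompl V W) {k : ℝ} (hk : 0 ≤ k)
    (h : ∀ v ∈ V, ∀ w ∈ W, v ≠ 0 → w ≠ 0 → |⟪v, w⟫| ≤ k * (‖v‖ * ‖w‖)) :
    √(1 - k) ^ finrank ℝ E ≤ (sumMap V W).normDet := by
  rw [← finrank_withLp_prod_of_isCompl hVW]
  exact pow_finrank_le_normDet _ (Real.sqrt_nonneg _) (sqrt_one_sub_mul_norm_le_norm_sumMap hk h)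

theorem normDet_sumMap_le (hVW : IsCompl V W) : (sumMap V W).normDet ≤ √2 ^ finrank ℝ E := by
  rw [← finrank_withLp_prod_of_isCompl hVW]
  exact normDet_le_pow_finrank _ norm_sumMap_le

theorem sdet_eq_normDet {F : Type*} [NormedAddCommGroup F] [InnerProductSpace ℝ F]
    [FiniteDimensional ℝ F] (A : E →ₗ[ℝ] F) (V : Submodule ℝ E) :
    sdet A V = (A ∘ₗ V.subtype).normDet := by
  rw [sdet, ← normDet_sq]
  exact Real.sqrt_sq (normDet_nonneg _)

theorem abs_det_mul_normDet_sumMap (A : E ≃ₗ[ℝ] E) (hVW : IsCompl V W) :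
    |(A : E →ₗ[ℝ] E).det| * (sumMap V W).normDet =
      (sumMap (V.map (A : E →ₗ[ℝ] E)) (W.map (A : E →ₗ[ℝ] E))).normDet *
        (sdet (A : E →ₗ[ℝ] E) V * sdet (A : E →ₗ[ℝ] E) W) := by
  set V' := V.map (A : E →ₗ[ℝ] E)
  set W' := W.map (A : E →ₗ[ℝ] E)
  let AV := ((A : E →ₗ[ℝ] E) ∘ₗ V.subtype).codRestrict V' fun v ↦ Submodule.mem_map_of_mem v.2
  let AW := ((A : E →ₗ[ℝ] E) ∘ₗ W.subtype).codRestrict W' fun w ↦ Submodule.mem_map_of_mem w.2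
  have hcomm : (A : E →ₗ[ℝ] E) ∘ₗ sumMap V W = sumMap V' W' ∘ₗ (AV.prodMap AW).withLpMap 2 := by
    ext x; simp [AV, AW]
  have hVW' : IsCompl V' W' := hVW.map_linearEquiv A
  have h₁ := normDet_comp_of_finrank_eq (sumMap V W) (A : E →ₗ[ℝ] E)
    (finrank_withLp_prod_of_isCompl hVW)
  have h₂ := normDet_comp_of_finrank_eq ((AV.prodMap AW).withLpMap 2) (sumMap V' W')
    ((finrank_withLp_prod_of_isCompl hVW).trans (finrank_withLp_prod_of_isCompl hVW').symm)
  rw [hcomm, h₂, normDet_withLpMap_prodMap, normDet_eq_abs_det] at h₁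
  rw [← h₁, sdet_eq_normDet, sdet_eq_normDet, normDet_codRestrict, normDet_codRestrict]

end

/-- for direct sum decompositions `E = V ⊕ W` with angle bounded below by
`α > 0`, and automorphisms `A` carrying `V ⊕ W` to a decomposition `A(V) ⊕ A(W)` whose angle
is also at least `α`, the absolute determinant of `A` factorizes through the volume-scaling
determinants on `V` and `W` up to a multiplicative constant `c = c(α) > 0` depending only on
`α` (and the space, hence the dimensions). The angle bound is expressed by
`|⟪v,w⟫| ≤ cos α · ‖v‖ ‖w‖` for nonzero `v, w`. -/
theorem stmt9 {E : Type*} [NormedAddCommGroup E] [InnerProductSpace ℝ E]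
    [FiniteDimensional ℝ E] (α : ℝ) (hα0 : 0 < α) (hα : α ≤ Real.pi / 2) :
    ∃ c : ℝ, 0 < c ∧
      ∀ (A : E ≃ₗ[ℝ] E) (V W : Submodule ℝ E), IsCompl V W →
        (∀ v ∈ V, ∀ w ∈ W, v ≠ 0 → w ≠ 0 →
          |(inner ℝ v w : ℝ)| ≤ Real.cos α * (‖v‖ * ‖w‖)) →
        (∀ v ∈ V.map (A : E →ₗ[ℝ] E), ∀ w ∈ W.map (A : E →ₗ[ℝ] E), v ≠ 0 → w ≠ 0 →
          |(inner ℝ v w : ℝ)| ≤ Real.cos α * (‖v‖ * ‖w‖)) →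
        c * (sdet (A : E →ₗ[ℝ] E) V * sdet (A : E →ₗ[ℝ] E) W) ≤
            |LinearMap.det (A : E →ₗ[ℝ] E)| ∧
          |LinearMap.det (A : E →ₗ[ℝ] E)| ≤
            c⁻¹ * (sdet (A : E →ₗ[ℝ] E) V * sdet (A : E →ₗ[ℝ] E) W) := by
  have hcos_nonneg : 0 ≤ Real.cos α :=
    Real.cos_nonneg_of_mem_Icc ⟨by linarith [Real.pi_pos], hα⟩
  have hcos_lt_one : Real.cos α < 1 := by
    simpa using Real.cos_lt_cos_of_nonneg_of_le_pi le_rfl (by linarith [Real.pi_pos]) hα0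
  set m := √(1 - Real.cos α) ^ finrank ℝ E
  set M := √2 ^ finrank ℝ E
  have hm : 0 < m := pow_pos (Real.sqrt_pos.mpr (by linarith)) _
  refine ⟨m / M, by positivity, fun A V W hVW hang hang' ↦ ?_⟩
  have hS_lower := pow_le_normDet_sumMap hVW hcos_nonneg hang
  have hS_upper := normDet_sumMap_le hVW
  have hS'_lower := pow_le_normDet_sumMap (hVW.map_linearEquiv A) hcos_nonneg hang'
  have hS'_upper := normDet_sumMap_le (hVW.map_linearEquiv A)
  have key := abs_det_mul_normDet_sumMap A hVW
  have hP : 0 ≤ sdet (A : E →ₗ[ℝ] E) V * sdet (A : E →ₗ[ℝ] E) W :=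
    mul_nonneg (Real.sqrt_nonneg _) (Real.sqrt_nonneg _)
  have hdet := abs_nonneg (LinearMap.det (A : E →ₗ[ℝ] E))
  constructor
  · rw [div_mul_eq_mul_div, div_le_iff₀ (by positivity)]
    nlinarith [mul_le_mul_of_nonneg_right hS'_lower hP, mul_le_mul_of_nonneg_left hS_upper hdet]
  · rw [inv_div, div_mul_eq_mul_div, le_div_iff₀ hm]
    nlinarith [mul_le_mul_of_nonneg_right hS'_upper hP, mul_le_mul_of_nonneg_left hS_lower hdet]
end
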